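/- arXiv:1610.01871 — 5 statements merged into one kernel-verified Lean document; each statement's English description precedes it below -/
import Mathlib

section
/- Let X be a real reflexive Banach space and f : X → ℝ a convex, lower semicontinuous function that is Gâteaux differentiable on all of X, and whose convex conjugate f* is Gâteaux differentiable on all of X*. Then the gradient map ∇f : X → X* is a bijection and (∇f)⁻¹ = ∇f*. -/
/-!
Convexity turns a Gâteaux derivative into a subgradient, and conversely a subgradient is the
only possible Gâteaux derivative. The Fenchel–Young inequality `p x - f x ≤ f* p` is an equality
exactly when `p` is a subgradient of `f` at `x`, and in that case `x`, seen in the bidual, is a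
subgradient of the convex function `f*` at `p`. Applied to `p = ∇f x` this gives `∇f* (∇f x) = x`.
Conversely `x = ∇f* p` is a subgradient of `f*` at `p`; comparing `f* p` with `f*` at `∇f x`, where
Fenchel–Young is an equality, shows that `p` is a subgradient of `f` at `x`, so `∇f x = p`.
-/

open Set

section

variable {E : Type*} [NormedAddCommGroup E] [NormedSpace ℝ E]

lemma ConvexOn.le_sub_of_hasLineDerivAt {s : Set E} {h : E → ℝ} {d : ℝ} {x v : E}
    (hc : ConvexOn ℝ s h) (hx : x ∈ s) (hxv : x + v ∈ s) (hd : HasLineDerivAt ℝ h d x v) :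
    d ≤ h (x + v) - h x := by
  set L : ℝ →ᵃ[ℝ] E := AffineMap.lineMap x (x + v)
  have hL : ∀ t : ℝ, L t = x + t • v := fun t => by
    simp [L, AffineMap.lineMap_apply, add_comm]
  have hderiv : HasDerivAt (h ∘ L) d 0 := by
    rw [show h ∘ L = fun t => h (x + t • v) from funext fun t => congrArg h (hL t)]
    exact hd
  have h0 : (0 : ℝ) ∈ L ⁻¹' s := by simpa [hL] using hx
  have h1 : (1 : ℝ) ∈ L ⁻¹' s := by simpa [hL] using hxv
  simpa [slope_def_field, hL] using
    (hc.comp_affineMap L).le_slope_of_hasDerivAt h0 h1 one_pos hderiv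

def HasSubgradientAt (h : E → ℝ) (φ : StrongDual ℝ E) (x : E) : Prop :=
  ∀ y, h x + φ (y - x) ≤ h y

lemma ConvexOn.hasSubgradientAt_of_hasLineDerivAt {h : E → ℝ} {φ : StrongDual ℝ E} {x : E}
    (hc : ConvexOn ℝ univ h) (hd : ∀ v, HasLineDerivAt ℝ h (φ v) x v) :
    HasSubgradientAt h φ x := fun y => by
  have := hc.le_sub_of_hasLineDerivAt (mem_univ x) (mem_univ _) (hd (y - x))
  rw [add_sub_cancel] at this
  linarith

lemma HasSubgradientAt.eq_of_hasLineDerivAt {h : E → ℝ} {φ : StrongDual ℝ E} {x v : E} {d : ℝ}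
    (hs : HasSubgradientAt h φ x) (hd : HasLineDerivAt ℝ h d x v) : d = φ v := by
  have hψ : HasDerivAt (fun t : ℝ => h (x + t • v) - (h x + t * φ v)) (d - φ v) 0 :=
    (hd : HasDerivAt (fun t : ℝ => h (x + t • v)) d 0).sub
      ((hasDerivAt_mul_const (φ v)).const_add (h x))
  have hmin : IsLocalMin (fun t : ℝ => h (x + t • v) - (h x + t * φ v)) 0 :=
    Filter.Eventually.of_forall fun t => by
      have := hs (x + t • v)
      simp only [add_sub_cancel_left, map_smul, smul_eq_mul] at this
      simp only [zero_smul, add_zero, zero_mul, sub_self]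
      linarith
  linarith [hmin.hasDerivAt_eq_zero hψ]

def IsConvexConjugate (f : E → ℝ) (fstar : StrongDual ℝ E → ℝ) : Prop :=
  ∀ p, IsLUB (range fun x => p x - f x) (fstar p)

namespace IsConvexConjugate

variable {f : E → ℝ} {fstar : StrongDual ℝ E → ℝ} {p : StrongDual ℝ E} {x : E}

lemma sub_le (hfstar : IsConvexConjugate f fstar) (p : StrongDual ℝ E) (x : E) :
    p x - f x ≤ fstar p :=
  (hfstar p).1 ⟨x, rfl⟩

lemma convexOn (hfstar : IsConvexConjugate f fstar) : ConvexOn ℝ univ fstar := by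
  refine ⟨convex_univ, fun p _ q _ a b ha hb hab => (hfstar _).2 ?_⟩
  rintro _ ⟨x, rfl⟩
  have hp := mul_le_mul_of_nonneg_left (hfstar.sub_le p x) ha
  have hq := mul_le_mul_of_nonneg_left (hfstar.sub_le q x) hb
  calc (a • p + b • q) x - f x = a * (p x - f x) + b * (q x - f x) := by
        simp only [add_apply, smul_apply, smul_eq_mul]
        linear_combination f x * hab
    _ ≤ a • fstar p + b • fstar q := by simp only [smul_eq_mul]; linarith

lemma eq_of_hasSubgradientAt (hfstar : IsConvexConjugate f fstar)
    (hs : HasSubgradientAt f p x) : fstar p = p x - f x := by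
  refine le_antisymm ((hfstar p).2 ?_) (hfstar.sub_le p x)
  rintro _ ⟨y, rfl⟩
  have := hs y
  rw [map_sub] at this
  dsimp only
  linarith

lemma hasSubgradientAt_of_le (hfstar : IsConvexConjugate f fstar) (h : fstar p ≤ p x - f x) :
    HasSubgradientAt f p x := fun y => by
  have := hfstar.sub_le p y
  rw [map_sub]
  linarith

lemma hasSubgradientAt_dual (hfstar : IsConvexConjugate f fstar)
    (hs : HasSubgradientAt f p x) :
    HasSubgradientAt fstar (NormedSpace.inclusionInDoubleDual ℝ E x) p := fun q => by
  have := hfstar.sub_le q x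
  rw [hfstar.eq_of_hasSubgradientAt hs, NormedSpace.dual_def, sub_apply]
  linarith

lemma hasSubgradientAt_of_dual (hfstar : IsConvexConjugate f fstar) {q : StrongDual ℝ E}
    (hs : HasSubgradientAt fstar (NormedSpace.inclusionInDoubleDual ℝ E x) p)
    (hq : HasSubgradientAt f q x) : HasSubgradientAt f p x := by
  refine hfstar.hasSubgradientAt_of_le ?_
  have := hs q
  rw [hfstar.eq_of_hasSubgradientAt hq, NormedSpace.dual_def, sub_apply] at this
  linarith

end IsConvexConjugate

end

theorem fully_legendre_gradient_bijective_inverse_general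
    {X : Type*} [NormedAddCommGroup X] [NormedSpace ℝ X]
    (f : X → ℝ) (hconv : ConvexOn ℝ Set.univ f)
    (g : X → StrongDual ℝ X)
    (hg : ∀ x v, HasLineDerivAt ℝ f (g x v) x v)
    (fstar : StrongDual ℝ X → ℝ)
    (hfstar : ∀ p, IsLUB (Set.range fun x => p x - f x) (fstar p))
    (gstar : StrongDual ℝ X → X)
    (hgstar : ∀ p q, HasLineDerivAt ℝ fstar (q (gstar p)) p q) :
    Function.Bijective g ∧ (∀ x, gstar (g x) = x) ∧ (∀ p, g (gstar p) = p) := by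
  have hconj : IsConvexConjugate f fstar := hfstar
  have hsub x : HasSubgradientAt f (g x) x := hconv.hasSubgradientAt_of_hasLineDerivAt (hg x)
  have hsub_star p : HasSubgradientAt fstar (NormedSpace.inclusionInDoubleDual ℝ X (gstar p)) p :=
    hconj.convexOn.hasSubgradientAt_of_hasLineDerivAt (hgstar p)
  have left : Function.LeftInverse gstar g := fun x =>
    SeparatingDual.eq_iff_forall_dual_eq.2 fun q =>
      (hconj.hasSubgradientAt_dual (hsub x)).eq_of_hasLineDerivAt (hgstar (g x) q)
  have right : Function.LeftInverse g gstar := fun p =>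
    ContinuousLinearMap.ext fun v =>
      (hconj.hasSubgradientAt_of_dual (hsub_star p) (hsub _)).eq_of_hasLineDerivAt (hg _ v)
  exact ⟨⟨left.injective, right.surjective⟩, left, right⟩

/-- For a fully Legendre function `f` on a real reflexive Banach
space `X` (convex, lower semicontinuous, Gâteaux differentiable on all of `X`,
with conjugate `f*` Gâteaux differentiable on all of `X*`), the gradient map
`∇f : X → X*` is a bijection and `(∇f)⁻¹ = ∇f*` (where `∇f*` is viewed as a map
`X* → X` via the reflexivity identification `X ≅ X**`). -/
theorem fully_legendre_gradient_bijective_inverse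
    {X : Type*} [NormedAddCommGroup X] [NormedSpace ℝ X] [CompleteSpace X]
    (hrefl : Function.Surjective (NormedSpace.inclusionInDoubleDual ℝ X))
    (f : X → ℝ) (hconv : ConvexOn ℝ Set.univ f) (hlsc : LowerSemicontinuous f)
    (g : X → StrongDual ℝ X)
    (hg : ∀ x v, HasLineDerivAt ℝ f (g x v) x v)
    (fstar : StrongDual ℝ X → ℝ)
    (hfstar : ∀ p, IsLUB (Set.range fun x => p x - f x) (fstar p))
    (gstar : StrongDual ℝ X → X)
    (hgstar : ∀ p q, HasLineDerivAt ℝ fstar (q (gstar p)) p q) :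
    Function.Bijective g ∧ (∀ x, gstar (g x) = x) ∧ (∀ p, g (gstar p) = p) :=
  fully_legendre_gradient_bijective_inverse_general f hconv g hg fstar hfstar gstar hgstar
end

section
/- Let X = ℝ^m with the Euclidean norm and let f : X → ℝ be twice continuously differentiable with positive definite Hessian at each point. Suppose there exist ρ ∈ (0,1), r > 0 and β > 0 such that inf{⟨f''(x)w, w⟩ : ‖w‖ = 1} ≥ β/‖x‖^ρ for all x with ‖x‖ ≥ r. Then f is super-coercive, i.e., lim_{‖x‖→∞} f(x)/‖x‖ = ∞. -/
/-!
Along the ray `t ↦ t • u` through a unit vector `u`, the second derivative of `f` at distance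
`t ∈ [r, T]` is at least `β / T ^ ρ`, so Taylor's formula from the sphere of radius `r` gives
`f (T • u) ≥ -A - B T + (β / 8) T ^ (2 - ρ)`, where `A` and `B` bound `f` and `f'` on that
(compact) sphere. Since `2 - ρ > 1`, this lower bound outgrows every linear function.
-/

open Set Filter

theorem add_deriv_mul_add_le_of_le_deriv2 {g g' g'' : ℝ → ℝ} {a b c : ℝ} (hab : a ≤ b)
    (hg : ∀ t, HasDerivAt g (g' t) t) (hg' : ∀ t, HasDerivAt g' (g'' t) t)
    (hc : ∀ t ∈ Icc a b, c ≤ g'' t) :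
    g a + g' a * (b - a) + c / 2 * (b - a) ^ 2 ≤ g b := by
  have hslope : ∀ t ∈ Icc a b, c * (t - a) ≤ g' t - g' a := fun t ht =>
    convex_Icc a b |>.mul_sub_le_image_sub_of_le_deriv
      (fun s _ => (hg' s).continuousAt.continuousWithinAt)
      (fun s _ => (hg' s).differentiableAt.differentiableWithinAt)
      (fun s hs => (hg' s).deriv ▸ hc s (interior_subset hs)) a (left_mem_Icc.2 hab) t ht ht.1
  set ψ : ℝ → ℝ := fun t => g t - g' a * t - c / 2 * (t - a) ^ 2
  have hψ : ∀ t, HasDerivAt ψ (g' t - g' a - c * (t - a)) t := fun t => by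
    refine (((hg t).sub ((hasDerivAt_id' t).const_mul (g' a))).sub
      ((((hasDerivAt_id' t).sub_const a).pow 2).const_mul (c / 2))).congr_deriv ?_
    push_cast
    ring
  have hmono : MonotoneOn ψ (Icc a b) :=
    monotoneOn_of_deriv_nonneg (convex_Icc a b)
      (fun t _ => (hψ t).continuousAt.continuousWithinAt)
      (fun t _ => (hψ t).differentiableAt.differentiableWithinAt)
      (fun t ht => (hψ t).deriv ▸ by linarith [hslope t (interior_subset ht)])
  have := hmono (left_mem_Icc.2 hab) (right_mem_Icc.2 hab) hab
  simp only [ψ, sub_self] at this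
  linarith

section Ray

variable {E : Type*} [NormedAddCommGroup E] [NormedSpace ℝ E]

theorem DifferentiableAt.hasDerivAt_comp_smul_const {F : Type*} [NormedAddCommGroup F]
    [NormedSpace ℝ F] {G : E → F} {u : E} {t : ℝ} (hG : DifferentiableAt ℝ G (t • u)) :
    HasDerivAt (fun s : ℝ => G (s • u)) (fderiv ℝ G (t • u) u) t :=
  hG.hasFDerivAt.comp_hasDerivAt t (by simpa using (hasDerivAt_id t).smul_const u)

theorem add_fderiv_mul_add_le_comp_smul {f : E → ℝ} (hf : Differentiable ℝ f)
    (hf' : Differentiable ℝ (fderiv ℝ f)) {u : E} {a b c : ℝ} (hab : a ≤ b)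
    (hc : ∀ t ∈ Icc a b, c ≤ fderiv ℝ (fderiv ℝ f) (t • u) u u) :
    f (a • u) + fderiv ℝ f (a • u) u * (b - a) + c / 2 * (b - a) ^ 2 ≤ f (b • u) :=
  add_deriv_mul_add_le_of_le_deriv2 hab (fun _ => (hf _).hasDerivAt_comp_smul_const)
    (fun t => (ContinuousLinearMap.apply ℝ ℝ u).hasFDerivAt.comp_hasDerivAt t
      (hf' _).hasDerivAt_comp_smul_const) hc

theorem add_fderiv_mul_add_rpow_le_of_hessian_decay {f : E → ℝ} (hf : Differentiable ℝ f)
    (hf' : Differentiable ℝ (fderiv ℝ f)) {ρ r β : ℝ} (hρ : 0 ≤ ρ) (hr : 0 < r) (hβ : 0 ≤ β)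
    (hdecay : ∀ x, r ≤ ‖x‖ → ∀ w, ‖w‖ = 1 → β / ‖x‖ ^ ρ ≤ fderiv ℝ (fderiv ℝ f) x w w)
    {u : E} (hu : ‖u‖ = 1) {T : ℝ} (hT : 2 * r ≤ T) :
    f (r • u) + fderiv ℝ f (r • u) u * (T - r) + β / 8 * T ^ (2 - ρ) ≤ f (T • u) := by
  have hT0 : 0 < T := by linarith
  have hc : ∀ t ∈ Icc r T, β / T ^ ρ ≤ fderiv ℝ (fderiv ℝ f) (t • u) u u := by
    intro t ⟨hrt, htT⟩
    have ht0 : 0 < t := hr.trans_le hrt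
    have hnorm : ‖t • u‖ = t := by rw [norm_smul, hu, mul_one, Real.norm_of_nonneg ht0.le]
    have := hdecay (t • u) (hnorm.ge.trans' hrt) u hu
    rw [hnorm] at this
    calc β / T ^ ρ ≤ β / t ^ ρ := by gcongr
      _ ≤ _ := this
  have hquad : β / 8 * T ^ (2 - ρ) ≤ β / T ^ ρ / 2 * (T - r) ^ 2 := by
    rw [Real.rpow_sub hT0, Real.rpow_two]
    have : (T / 2) ^ 2 ≤ (T - r) ^ 2 := by gcongr; linarith
    calc β / 8 * (T ^ 2 / T ^ ρ) = β / T ^ ρ / 2 * (T / 2) ^ 2 := by ring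
      _ ≤ _ := by gcongr
  linarith [add_fderiv_mul_add_le_comp_smul hf hf' (by linarith) hc]

end Ray

theorem exists_rpow_lower_bound_of_hessian_decay {E : Type*} [NormedAddCommGroup E]
    [NormedSpace ℝ E] [ProperSpace E] {f : E → ℝ} (hf : ContDiff ℝ 2 f) {ρ r β : ℝ}
    (hρ : 0 ≤ ρ) (hr : 0 < r) (hβ : 0 ≤ β)
    (hdecay : ∀ x, r ≤ ‖x‖ → ∀ w, ‖w‖ = 1 → β / ‖x‖ ^ ρ ≤ fderiv ℝ (fderiv ℝ f) x w w) :
    ∃ A B : ℝ, ∀ x, 2 * r ≤ ‖x‖ → β / 8 * ‖x‖ ^ (2 - ρ) - A - B * ‖x‖ ≤ f x := by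
  have hdf : ContDiff ℝ 1 (fderiv ℝ f) := hf.fderiv_right le_rfl
  obtain ⟨A, hA⟩ := (isCompact_sphere (0 : E) r).exists_bound_of_continuousOn
    hf.continuous.continuousOn
  obtain ⟨B, hB⟩ := (isCompact_sphere (0 : E) r).exists_bound_of_continuousOn
    hdf.continuous.continuousOn
  refine ⟨A, max B 0, fun x hx => ?_⟩
  set T := ‖x‖
  have hT0 : 0 < T := by linarith
  set u := T⁻¹ • x
  have hu : ‖u‖ = 1 := by rw [norm_smul, norm_inv, norm_norm, inv_mul_cancel₀ hT0.ne']
  have hru : r • u ∈ Metric.sphere (0 : E) r := by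
    rw [mem_sphere_zero_iff_norm, norm_smul, hu, mul_one, Real.norm_of_nonneg hr.le]
  have hfr : -A ≤ f (r • u) := neg_le_of_abs_le (hA _ hru)
  have hf'r : -max B 0 ≤ fderiv ℝ f (r • u) u := by
    refine neg_le_of_abs_le ((fderiv ℝ f (r • u)).le_opNorm u |>.trans ?_)
    rw [hu, mul_one]
    exact (hB _ hru).trans (le_max_left B 0)
  have hray := add_fderiv_mul_add_rpow_le_of_hessian_decay (hf.differentiable two_ne_zero)
    (hdf.differentiable one_ne_zero) hρ hr hβ hdecay hu hx
  rw [smul_inv_smul₀ hT0.ne'] at hray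
  linarith [mul_le_mul_of_nonneg_right hf'r (by linarith : 0 ≤ T - r),
    mul_nonneg (le_max_right B 0) hr.le]

theorem tendsto_div_norm_atTop_of_rpow_lower_bound {E : Type*} [SeminormedAddCommGroup E]
    {f : E → ℝ} {c p A B R : ℝ} (hc : 0 < c) (hp : 1 < p)
    (hf : ∀ x, R ≤ ‖x‖ → c * ‖x‖ ^ p - A - B * ‖x‖ ≤ f x) :
    Tendsto (fun x => f x / ‖x‖) (comap norm atTop) atTop := by
  have hlim : Tendsto (fun T : ℝ => c * T ^ (p - 1) + (-A / T - B)) atTop atTop :=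
    ((tendsto_rpow_atTop (by linarith)).const_mul_atTop hc).atTop_add
      (by simpa using (tendsto_const_nhds.div_atTop tendsto_id).sub_const B)
  refine tendsto_atTop_mono' _ ?_ (hlim.comp tendsto_comap)
  filter_upwards [(eventually_ge_atTop (max R 1)).comap norm] with x hx
  have hT0 : 0 < ‖x‖ := zero_lt_one.trans_le (le_of_max_le_right hx)
  rw [Function.comp_apply, le_div_iff₀ hT0, Real.rpow_sub_one hT0.ne']
  calc (c * (‖x‖ ^ p / ‖x‖) + (-A / ‖x‖ - B)) * ‖x‖ = c * ‖x‖ ^ p - A - B * ‖x‖ := by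
        field_simp
        ring
    _ ≤ f x := hf x (le_of_max_le_left hx)

theorem slow_hessian_decay_supercoercive_general (m : ℕ)
    (f : EuclideanSpace ℝ (Fin m) → ℝ) (hf : ContDiff ℝ 2 f)
    (ρ r β : ℝ) (hρ : ρ ∈ Set.Ioo (0:ℝ) 1) (hr : 0 < r) (hβ : 0 < β)
    (hdecay : ∀ x, r ≤ ‖x‖ → ∀ w, ‖w‖ = 1 →
      β / ‖x‖ ^ ρ ≤ fderiv ℝ (fderiv ℝ f) x w w) :
    Filter.Tendsto (fun x => f x / ‖x‖) (Filter.comap norm Filter.atTop)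
      Filter.atTop := by
  obtain ⟨A, B, hbound⟩ :=
    exists_rpow_lower_bound_of_hessian_decay hf hρ.1.le hr hβ.le hdecay
  exact tendsto_div_norm_atTop_of_rpow_lower_bound (by positivity) (by linarith [hρ.2]) hbound

/-- A twice continuously differentiable function on `ℝ^m` with
positive definite Hessian satisfying the asymptotically slow decay condition
`inf{⟨f''(x)w,w⟩ : ‖w‖ = 1} ≥ β/‖x‖^ρ` for `‖x‖ ≥ r` (with `ρ ∈ (0,1)`,
`r > 0`, `β > 0`) is super-coercive: `f(x)/‖x‖ → ∞` as `‖x‖ → ∞`. -/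
theorem slow_hessian_decay_supercoercive (m : ℕ)
    (f : EuclideanSpace ℝ (Fin m) → ℝ) (hf : ContDiff ℝ 2 f)
    (hpd : ∀ x w, w ≠ 0 → 0 < fderiv ℝ (fderiv ℝ f) x w w)
    (ρ r β : ℝ) (hρ : ρ ∈ Set.Ioo (0:ℝ) 1) (hr : 0 < r) (hβ : 0 < β)
    (hdecay : ∀ x, r ≤ ‖x‖ → ∀ w, ‖w‖ = 1 →
      β / ‖x‖ ^ ρ ≤ fderiv ℝ (fderiv ℝ f) x w w) :
    Filter.Tendsto (fun x => f x / ‖x‖) (Filter.comap norm Filter.atTop)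
      Filter.atTop :=
  slow_hessian_decay_supercoercive_general m f hf ρ r β hρ hr hβ hdecay
end

section
/- Let X be a real Hilbert space, A : X → 2^X maximally monotone, x ∈ X with 0 ∉ A(x), μ > 0 and σ > 0. Then there exists r > 0 such that for every η ∈ X with ‖η‖ < r there exists a unique pair (y, ξ) ∈ X × X satisfying: ξ ∈ A(y), 0 = ξ + μ(y − x) + η, and ‖η‖ ≤ σ·max{‖ξ‖, μ‖y − x‖}. Moreover y = (I + (1/μ)A)⁻¹(x − (1/μ)η) and ξ = −η − μ(y − x). -/
open RealInnerProductSpace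

section MintyAux
variable {X : Type*} [NormedAddCommGroup X] [InnerProductSpace ℝ X]

private lemma norm_combo_sq (a b : X) (t : ℝ) :
    ‖(1-t)•a + t•b‖^2 = (1-t)*‖a‖^2 + t*‖b‖^2 - (t*(1-t))*‖a-b‖^2 := by
  have h1 : ∀ c : X, ‖c‖^2 = ⟪c, c⟫ := fun c => (real_inner_self_eq_norm_sq c).symm
  rw [h1, h1, h1, h1]
  simp only [inner_add_left, inner_add_right, inner_sub_left, inner_sub_right,
    real_inner_smul_left, real_inner_smul_right]
  rw [real_inner_comm b a]
  ring

private def mGraph (B : X → Set X) : Set (X × X) := {q | q.2 ∈ B q.1}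

private noncomputable def mPsi (q p : X × X) : ℝ :=
  ⟪p.1, q.2⟫ + ⟪q.1, p.2⟫ - ⟪q.1, q.2⟫ + ‖p.1‖^2/2 + ‖p.2‖^2/2

private def mT (B : X → Set X) (p : X × X) : Set ℝ := (fun q => mPsi q p) '' mGraph B

private def mD (B : X → Set X) : Set (X × X) := {p | BddAbove (mT B p)}

private noncomputable def mG (B : X → Set X) (p : X × X) : ℝ := sSup (mT B p)

variable (B : X → Set X)

private lemma mGraph_ne
    (hmax : ∀ y v, (∀ x u, u ∈ B x → 0 ≤ ⟪v - u, y - x⟫) → v ∈ B y) :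
    (mGraph B).Nonempty := by
  by_contra h
  rw [Set.not_nonempty_iff_eq_empty] at h
  have : (0 : X) ∈ B 0 := hmax 0 0 (fun a u hu => by
    exfalso; exact absurd (show ((a,u) : X × X) ∈ mGraph B from hu) (by simp [h]))
  exact absurd (show ((0,0) : X × X) ∈ mGraph B from this) (by simp [h])

private lemma mT_ne (hne : (mGraph B).Nonempty) (p : X × X) : (mT B p).Nonempty :=
  hne.image _

private lemma mSD
    (hmono : ∀ x1 x2 u1 u2, u1 ∈ B x1 → u2 ∈ B x2 → 0 ≤ ⟪u1 - u2, x1 - x2⟫)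
    (hne : (mGraph B).Nonempty) :
    ∀ q ∈ mGraph B, q ∈ mD B ∧ mG B q = mPsi q q := by
  intro q hq
  have hub : ∀ r ∈ mT B q, r ≤ mPsi q q := by
    rintro r ⟨q', hq', rfl⟩
    have h0 := hmono q.1 q'.1 q.2 q'.2 hq hq'
    have he : ⟪q.2 - q'.2, q.1 - q'.1⟫ = mPsi q q - mPsi q' q := by
      simp only [mPsi, inner_sub_left, inner_sub_right]
      rw [real_inner_comm q.2 q.1, real_inner_comm q.2 q'.1,
        real_inner_comm q'.2 q.1, real_inner_comm q'.2 q'.1]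
      ring
    linarith
  have hD : q ∈ mD B := ⟨mPsi q q, fun r hr => hub r hr⟩
  exact ⟨hD, le_antisymm (csSup_le (mT_ne B hne q) hub) (le_csSup hD ⟨q, hq, rfl⟩)⟩

private lemma mGlb
    (hmax : ∀ y v, (∀ x u, u ∈ B x → 0 ≤ ⟪v - u, y - x⟫) → v ∈ B y) :
    ∀ p ∈ mD B, ⟪p.1, p.2⟫ + ‖p.1‖^2/2 + ‖p.2‖^2/2 ≤ mG B p := by
  intro p hp
  by_contra h
  push_neg at h
  have hmem : p.2 ∈ B p.1 := by
    apply hmax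
    intro a u hu
    have hle : mPsi (a, u) p ≤ mG B p := le_csSup hp ⟨(a,u), hu, rfl⟩
    have he : ⟪p.2 - u, p.1 - a⟫ =
        (⟪p.1, p.2⟫ + ‖p.1‖^2/2 + ‖p.2‖^2/2) - mPsi (a,u) p := by
      simp only [mPsi, inner_sub_left, inner_sub_right]
      rw [real_inner_comm p.2 p.1, real_inner_comm p.2 a,
        real_inner_comm u p.1, real_inner_comm u a]
      ring
    linarith
  have hle : mPsi p p ≤ mG B p := le_csSup hp ⟨p, hmem, rfl⟩
  have he : mPsi p p = ⟪p.1, p.2⟫ + ‖p.1‖^2/2 + ‖p.2‖^2/2 := by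
    simp only [mPsi]; ring
  linarith


private lemma mConv (hne : (mGraph B).Nonempty)
    {p₁ p₂ : X × X} (hp₁ : p₁ ∈ mD B) (hp₂ : p₂ ∈ mD B)
    {t : ℝ} (ht0 : 0 ≤ t) (ht1 : t ≤ 1) :
    ((1-t)•p₁.1+t•p₂.1, (1-t)•p₁.2+t•p₂.2) ∈ mD B ∧
      mG B ((1-t)•p₁.1+t•p₂.1, (1-t)•p₁.2+t•p₂.2) ≤
        (1-t)*mG B p₁ + t*mG B p₂
          - t*(1-t)/2*(‖p₁.1-p₂.1‖^2+‖p₁.2-p₂.2‖^2) := by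
  have key : ∀ q ∈ mGraph B,
      mPsi q ((1-t)•p₁.1+t•p₂.1, (1-t)•p₁.2+t•p₂.2) =
        (1-t)*mPsi q p₁ + t*mPsi q p₂
          - t*(1-t)/2*(‖p₁.1-p₂.1‖^2+‖p₁.2-p₂.2‖^2) := by
    intro q _
    simp only [mPsi, inner_add_left, inner_add_right, real_inner_smul_left,
      real_inner_smul_right, norm_combo_sq]
    ring
  have hub : ∀ r ∈ mT B ((1-t)•p₁.1+t•p₂.1, (1-t)•p₁.2+t•p₂.2),
      r ≤ (1-t)*mG B p₁ + t*mG B p₂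
          - t*(1-t)/2*(‖p₁.1-p₂.1‖^2+‖p₁.2-p₂.2‖^2) := by
    rintro r ⟨q, hq, rfl⟩
    show mPsi q ((1-t)•p₁.1+t•p₂.1, (1-t)•p₁.2+t•p₂.2) ≤ _
    rw [key q hq]
    have h1 : mPsi q p₁ ≤ mG B p₁ := le_csSup hp₁ ⟨q, hq, rfl⟩
    have h2 : mPsi q p₂ ≤ mG B p₂ := le_csSup hp₂ ⟨q, hq, rfl⟩
    nlinarith [mul_le_mul_of_nonneg_left h1 (by linarith : (0:ℝ) ≤ 1 - t),
      mul_le_mul_of_nonneg_left h2 ht0]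
  have hD : ((1-t)•p₁.1+t•p₂.1, (1-t)•p₁.2+t•p₂.2) ∈ mD B :=
    ⟨_, fun r hr => hub r hr⟩
  exact ⟨hD, csSup_le (mT_ne B hne _) hub⟩

private lemma minty_zero [CompleteSpace X]
    (hmono : ∀ x1 x2 u1 u2, u1 ∈ B x1 → u2 ∈ B x2 → 0 ≤ ⟪u1 - u2, x1 - x2⟫)
    (hmax : ∀ y v, (∀ x u, u ∈ B x → 0 ≤ ⟪v - u, y - x⟫) → v ∈ B y) :
    ∃ y v, v ∈ B y ∧ y + v = 0 := by
  classical
  have hne : (mGraph B).Nonempty := mGraph_ne B hmax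
  have hquad : ∀ a b : X, ⟪a, b⟫ + ‖a‖^2/2 + ‖b‖^2/2 = ‖a + b‖^2/2 := by
    intro a b; have := norm_add_sq_real a b; linarith
  have hG0 : ∀ p ∈ mD B, (0:ℝ) ≤ mG B p := by
    intro p hp
    have h1 := mGlb B hmax p hp
    have h2 := hquad p.1 p.2
    nlinarith [sq_nonneg ‖p.1 + p.2‖]
  have hDne : (mD B).Nonempty := hne.imp (fun q hq => (mSD B hmono hne q hq).1)
  have hbdd : BddBelow (mG B '' mD B) := ⟨0, by rintro r ⟨p, hp, rfl⟩; exact hG0 p hp⟩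
  set m : ℝ := sInf (mG B '' mD B) with hmdef
  have hm_le : ∀ p ∈ mD B, m ≤ mG B p := fun p hp => csInf_le hbdd ⟨p, hp, rfl⟩
  -- minimizing sequence
  have hseq : ∀ n : ℕ, ∃ p ∈ mD B, mG B p < m + 1/(n+1) := by
    intro n
    have hlt : m < m + 1/(n+1) := by
      have h : (0:ℝ) < 1/((n:ℝ)+1) := by positivity
      linarith
    obtain ⟨r, ⟨p, hp, rfl⟩, hr⟩ := exists_lt_of_csInf_lt (hDne.image _) hlt
    exact ⟨p, hp, hr⟩
  choose p hpD hpG using hseq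
  -- Cauchy estimates
  have hest : ∀ N n k : ℕ, N ≤ n → N ≤ k →
      ‖(p n).1-(p k).1‖^2 + ‖(p n).2-(p k).2‖^2 ≤ 8*(1/(N+1)) := by
    intro N n k hn hk
    have hc := mConv B hne (hpD n) (hpD k) (by norm_num : (0:ℝ) ≤ 1/2) (by norm_num)
    have hmid := hm_le _ hc.1
    have h1 := hpG n
    have h2 := hpG k
    have hcn : (N:ℝ) ≤ n := Nat.cast_le.mpr hn
    have hck : (N:ℝ) ≤ k := Nat.cast_le.mpr hk
    have hmono1 : 1/((n:ℝ)+1) ≤ 1/((N:ℝ)+1) :=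
      one_div_le_one_div_of_le (by positivity) (by linarith)
    have hmono2 : 1/((k:ℝ)+1) ≤ 1/((N:ℝ)+1) :=
      one_div_le_one_div_of_le (by positivity) (by linarith)
    linarith [hc.2, hmid, h1, h2, hmono1, hmono2]
  have hb0 : Filter.Tendsto (fun N : ℕ => Real.sqrt (8*(1/(N+1)))) Filter.atTop (nhds 0) := by
    have h1 : Filter.Tendsto (fun N : ℕ => 8*(1/((N:ℝ)+1))) Filter.atTop (nhds 0) := by
      have h8 := tendsto_one_div_add_atTop_nhds_zero_nat.const_mul (8:ℝ)
      simpa using h8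
    have h2 := (Real.continuous_sqrt.tendsto 0).comp h1
    simpa only [Function.comp_def, Real.sqrt_zero] using h2
  have hcau1 : CauchySeq (fun n => (p n).1) := by
    apply cauchySeq_of_le_tendsto_0 (fun N : ℕ => Real.sqrt (8*(1/(N+1)))) _ hb0
    intro n k N hn hk
    rw [dist_eq_norm]
    have h := hest N n k hn hk
    have : ‖(p n).1-(p k).1‖^2 ≤ 8*(1/((N:ℝ)+1)) := by nlinarith [sq_nonneg ‖(p n).2-(p k).2‖]
    calc ‖(p n).1-(p k).1‖ = Real.sqrt (‖(p n).1-(p k).1‖^2) := by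
          rw [Real.sqrt_sq (norm_nonneg _)]
      _ ≤ Real.sqrt (8*(1/(N+1))) := Real.sqrt_le_sqrt this
  have hcau2 : CauchySeq (fun n => (p n).2) := by
    apply cauchySeq_of_le_tendsto_0 (fun N : ℕ => Real.sqrt (8*(1/(N+1)))) _ hb0
    intro n k N hn hk
    rw [dist_eq_norm]
    have h := hest N n k hn hk
    have : ‖(p n).2-(p k).2‖^2 ≤ 8*(1/((N:ℝ)+1)) := by nlinarith [sq_nonneg ‖(p n).1-(p k).1‖]
    calc ‖(p n).2-(p k).2‖ = Real.sqrt (‖(p n).2-(p k).2‖^2) := by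
          rw [Real.sqrt_sq (norm_nonneg _)]
      _ ≤ Real.sqrt (8*(1/(N+1))) := Real.sqrt_le_sqrt this
  obtain ⟨xb, hxb⟩ := cauchySeq_tendsto_of_complete hcau1
  obtain ⟨ub, hub⟩ := cauchySeq_tendsto_of_complete hcau2
  -- continuity of mPsi q along the sequence
  have hψcont : ∀ q : X × X, Filter.Tendsto (fun n => mPsi q (p n)) Filter.atTop
      (nhds (mPsi q (xb, ub))) := by
    intro q
    simp only [mPsi]
    exact ((((Filter.Tendsto.inner hxb tendsto_const_nhds).add
      (Filter.Tendsto.inner tendsto_const_nhds hub)).sub tendsto_const_nhds).add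
      (((hxb.norm.pow 2).div_const 2))).add ((hub.norm.pow 2).div_const 2)
  have hcm : Filter.Tendsto (fun n : ℕ => m + 1/((n:ℝ)+1)) Filter.atTop (nhds m) := by
    have := tendsto_one_div_add_atTop_nhds_zero_nat.const_add m
    simpa using this
  have hubm : ∀ q ∈ mGraph B, mPsi q (xb, ub) ≤ m := by
    intro q hq
    apply le_of_tendsto_of_tendsto' (hψcont q) hcm
    intro n
    exact le_trans (le_csSup (hpD n) ⟨q, hq, rfl⟩) (le_of_lt (hpG n))
  have hpbD : (xb, ub) ∈ mD B := ⟨m, by rintro r ⟨q, hq, rfl⟩; exact hubm q hq⟩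
  have hGpb : mG B (xb, ub) = m :=
    le_antisymm (csSup_le (mT_ne B hne _) (by rintro r ⟨q, hq, rfl⟩; exact hubm q hq))
      (hm_le _ hpbD)
  -- subgradient inequality at graph points
  have hsub : ∀ q ∈ mGraph B,
      m + (‖xb-q.1‖^2+‖ub-q.2‖^2)/2 ≤ mG B q := by
    intro q hq
    have hqD := (mSD B hmono hne q hq).1
    set K : ℝ := ‖xb-q.1‖^2+‖ub-q.2‖^2 with hK
    have hstep : ∀ n : ℕ, m + (1 - 1/(n+1))/2*K ≤ mG B q := by
      intro n
      set t : ℝ := 1/(n+1) with htdef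
      have ht0 : 0 < t := by positivity
      have ht1 : t ≤ 1 := by
        rw [htdef]
        rw [div_le_one (by positivity)]
        norm_num
      have hc := mConv B hne hpbD hqD (le_of_lt ht0) ht1
      have hmid := hm_le _ hc.1
      rw [hGpb] at hc
      -- m ≤ (1-t)*m + t*mG B q - t*(1-t)/2*K
      have h2 : m ≤ (1-t)*m + t*mG B q - t*(1-t)/2*K := le_trans hmid hc.2
      have h3 : t*(m + (1-t)/2*K) ≤ t*(mG B q) := by nlinarith
      have := le_of_mul_le_mul_left (by linarith [h3] : t*(m + (1-t)/2*K) ≤ t*(mG B q)) ht0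
      linarith
    have hlim : Filter.Tendsto (fun n : ℕ => m + (1 - 1/((n:ℝ)+1))/2*K)
        Filter.atTop (nhds (m + (1-0)/2*K)) := by
      exact (((tendsto_const_nhds.sub
        tendsto_one_div_add_atTop_nhds_zero_nat).div_const 2).mul_const K).const_add m
    have hfin := le_of_tendsto' hlim hstep
    linarith [hfin]
  -- key geometric inequality
  have hkey : ∀ q ∈ mGraph B, ‖xb + ub‖^2 ≤ ⟪(-xb) - q.2, (-ub) - q.1⟫ := by
    intro q hq
    have h1 := hsub q hq
    have h2 := (mSD B hmono hne q hq).2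
    have h3 := mGlb B hmax (xb, ub) hpbD
    rw [h2] at h1
    have e1 : mPsi q q = ⟪q.1, q.2⟫ + ‖q.1‖^2/2 + ‖q.2‖^2/2 := by
      simp only [mPsi]; ring
    rw [e1] at h1
    have e2 : ‖xb - q.1‖^2 = ‖xb‖^2 - 2*⟪xb, q.1⟫ + ‖q.1‖^2 := by
      rw [norm_sub_sq_real]
    have e3 : ‖ub - q.2‖^2 = ‖ub‖^2 - 2*⟪ub, q.2⟫ + ‖q.2‖^2 := by
      rw [norm_sub_sq_real]
    have e4 : ‖xb + ub‖^2 = ‖xb‖^2 + 2*⟪xb, ub⟫ + ‖ub‖^2 := by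
      rw [norm_add_sq_real]
    have e5 : ⟪(-xb) - q.2, (-ub) - q.1⟫ =
        ⟪xb, ub⟫ + ⟪xb, q.1⟫ + ⟪ub, q.2⟫ + ⟪q.1, q.2⟫ := by
      simp only [inner_sub_left, inner_sub_right, inner_neg_left, inner_neg_right]
      rw [real_inner_comm ub xb, real_inner_comm q.1 xb, real_inner_comm q.2 ub,
        real_inner_comm q.2 q.1]
      ring
    -- h3 at (xb, ub): ⟪xb,ub⟫ + ‖xb‖²/2 + ‖ub‖²/2 ≤ mG B (xb,ub) = m
    rw [hGpb] at h3
    rw [e5, e4]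
    simp only at h1 h3
    linarith [h1, h3, e2, e3]
  have hmemf : (-xb) ∈ B (-ub) := by
    apply hmax
    intro a u hu
    have := hkey (a, u) hu
    exact le_trans (sq_nonneg _) this
  have h0 := hkey ((-ub), (-xb)) hmemf
  simp only [sub_self, inner_zero_left] at h0
  have hz : xb + ub = 0 := by
    have h4 : ‖xb + ub‖ = 0 := by nlinarith [norm_nonneg (xb + ub), h0]
    exact norm_eq_zero.mp h4
  refine ⟨-ub, -xb, hmemf, ?_⟩
  rw [← neg_add, add_comm]
  simp [hz]

end MintyAux

open RealInnerProductSpace in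
private lemma resolvent_exists {X : Type*} [NormedAddCommGroup X] [InnerProductSpace ℝ X]
    [CompleteSpace X] (A : X → Set X)
    (hmono : ∀ x1 x2 u1 u2, u1 ∈ A x1 → u2 ∈ A x2 → 0 ≤ ⟪u1 - u2, x1 - x2⟫)
    (hmax : ∀ y v, (∀ x u, u ∈ A x → 0 ≤ ⟪v - u, y - x⟫) → v ∈ A y)
    {μ : ℝ} (hμ : 0 < μ) (z : X) :
    ∃ y ξ, ξ ∈ A y ∧ μ • (y - z) + ξ = 0 := by
  set B : X → Set X := fun y => {w | μ • w ∈ A (y + z)} with hBdef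
  have hBmono : ∀ x1 x2 u1 u2, u1 ∈ B x1 → u2 ∈ B x2 → 0 ≤ ⟪u1 - u2, x1 - x2⟫ := by
    intro x1 x2 u1 u2 h1 h2
    have h := hmono (x1 + z) (x2 + z) (μ • u1) (μ • u2) h1 h2
    have e1 : μ • u1 - μ • u2 = μ • (u1 - u2) := by rw [smul_sub]
    have e2 : (x1 + z) - (x2 + z) = x1 - x2 := by abel
    rw [e1, e2, real_inner_smul_left] at h
    exact le_of_mul_le_mul_left (by linarith : μ * 0 ≤ μ * ⟪u1 - u2, x1 - x2⟫) hμ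
  have hBmax : ∀ y v, (∀ x u, u ∈ B x → 0 ≤ ⟪v - u, y - x⟫) → v ∈ B y := by
    intro y v h
    show μ • v ∈ A (y + z)
    apply hmax
    intro a u hu
    have hmem : (μ⁻¹ • u) ∈ B (a - z) := by
      show μ • (μ⁻¹ • u) ∈ A ((a - z) + z)
      rw [smul_smul, mul_inv_cancel₀ hμ.ne', one_smul]
      have : (a - z) + z = a := by abel
      rw [this]; exact hu
    have h2 := h (a - z) (μ⁻¹ • u) hmem
    have e1 : μ • v - u = μ • (v - μ⁻¹ • u) := by
      rw [smul_sub, smul_smul, mul_inv_cancel₀ hμ.ne', one_smul]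
    have e2 : (y + z) - a = y - (a - z) := by abel
    rw [e1, e2, real_inner_smul_left]
    exact mul_nonneg hμ.le h2
  obtain ⟨y', v', hv', hsum⟩ := minty_zero B hBmono hBmax
  refine ⟨y' + z, μ • v', hv', ?_⟩
  have : (y' + z) - z = y' := by abel
  rw [this, ← smul_add, hsum, smul_zero]

/-- (Well-definedness of the inexact iterative step of the
Solodov–Svaiter algorithm.) If `0 ∉ A(x)`, `μ > 0` and `σ > 0`, then there is
`r > 0` such that for every `η` with `‖η‖ < r` there is a unique pair `(y, ξ)`
with `ξ ∈ A(y)`, `0 = ξ + μ(y − x) + η` and `‖η‖ ≤ σ·max{‖ξ‖, μ‖y − x‖}`;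
moreover this pair satisfies `x − μ⁻¹η = y + μ⁻¹ξ` (i.e.
`y = (I + μ⁻¹A)⁻¹(x − μ⁻¹η)`) and `ξ = −η − μ(y − x)`. -/
theorem solodov_svaiter_inexact_step_well_defined
    {X : Type*} [NormedAddCommGroup X] [InnerProductSpace ℝ X] [CompleteSpace X]
    (A : X → Set X)
    (hmono : ∀ x1 x2 u1 u2, u1 ∈ A x1 → u2 ∈ A x2 → 0 ≤ ⟪u1 - u2, x1 - x2⟫)
    (hmax : ∀ y v, (∀ x u, u ∈ A x → 0 ≤ ⟪v - u, y - x⟫) → v ∈ A y)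
    (x : X) (hx : 0 ∉ A x) (μ σ : ℝ) (hμ : 0 < μ) (hσ : 0 < σ) :
    ∃ r > 0, ∀ η : X, ‖η‖ < r →
      (∃! p : X × X, p.2 ∈ A p.1 ∧ 0 = p.2 + μ • (p.1 - x) + η ∧
        ‖η‖ ≤ σ * max ‖p.2‖ (μ * ‖p.1 - x‖)) ∧
      (∀ y ξ, ξ ∈ A y → 0 = ξ + μ • (y - x) + η →
        x - μ⁻¹ • η = y + μ⁻¹ • ξ ∧ ξ = -η - μ • (y - x)) := by
  -- nonexpansiveness of the resolvent
  have hnon : ∀ z1 z2 y1 y2 ξ1 ξ2, ξ1 ∈ A y1 → ξ2 ∈ A y2 →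
      μ • (y1 - z1) + ξ1 = 0 → μ • (y2 - z2) + ξ2 = 0 → ‖y1 - y2‖ ≤ ‖z1 - z2‖ := by
    intro z1 z2 y1 y2 ξ1 ξ2 h1 h2 e1 e2
    have hm := hmono y1 y2 ξ1 ξ2 h1 h2
    have hd : ξ1 - ξ2 = μ • ((z1 - z2) - (y1 - y2)) := by
      have : ξ1 - ξ2 = (μ • (y1 - z1) + ξ1) - (μ • (y2 - z2) + ξ2)
          + μ • ((z1 - z2) - (y1 - y2)) := by
        simp only [smul_sub]; abel
      rw [this, e1, e2]; abel
    rw [hd, real_inner_smul_left, inner_sub_left, real_inner_self_eq_norm_sq] at hm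
    have h3 : ‖y1 - y2‖^2 ≤ ⟪z1 - z2, y1 - y2⟫ := by
      have := le_of_mul_le_mul_left
        (by linarith : μ * 0 ≤ μ * (⟪z1 - z2, y1 - y2⟫ - ‖y1 - y2‖^2)) hμ
      linarith
    have h4 := real_inner_le_norm (z1 - z2) (y1 - y2)
    rcases eq_or_lt_of_le (norm_nonneg (y1 - y2)) with h5 | h5
    · rw [← h5]; exact norm_nonneg _
    · nlinarith
  -- the exact solution at η = 0
  obtain ⟨y₀, ξ₀, hξ₀, he₀⟩ := resolvent_exists A hmono hmax hμ x
  have hy₀ : y₀ ≠ x := by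
    intro h
    rw [h, sub_self, smul_zero, zero_add] at he₀
    rw [h] at hξ₀
    exact hx (he₀ ▸ hξ₀)
  have hc : 0 < μ * ‖y₀ - x‖ := mul_pos hμ (norm_pos_iff.mpr (sub_ne_zero.mpr hy₀))
  set c : ℝ := μ * ‖y₀ - x‖ with hcdef
  refine ⟨σ * c / (1 + σ), by positivity, ?_⟩
  intro η hη
  -- solve for this η
  obtain ⟨y, ξ, hξA, heq⟩ := resolvent_exists A hmono hmax hμ (x - μ⁻¹ • η)
  have hsm : μ • (μ⁻¹ • η) = η := by rw [smul_smul, mul_inv_cancel₀ hμ.ne', one_smul]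
  have hsplit : y - (x - μ⁻¹ • η) = (y - x) + μ⁻¹ • η := by abel
  rw [hsplit, smul_add, hsm] at heq
  -- heq : μ • (y - x) + η + ξ = 0
  have eq2 : (0:X) = ξ + μ • (y - x) + η := by rw [← heq]; abel
  -- algebraic consequences (second bullet)
  have halg : ∀ y' ξ' : X, (0:X) = ξ' + μ • (y' - x) + η →
      x - μ⁻¹ • η = y' + μ⁻¹ • ξ' ∧ ξ' = -η - μ • (y' - x) := by
    intro y' ξ' he
    have h1 : ξ' = -η - μ • (y' - x) := by
      have h2 : ξ' - (-η - μ • (y' - x)) = ξ' + μ • (y' - x) + η := by abel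
      rw [← sub_eq_zero, h2, ← he]
    refine ⟨?_, h1⟩
    rw [h1]
    have h3 : μ⁻¹ • (-η - μ • (y' - x)) = -(μ⁻¹ • η) - (y' - x) := by
      rw [smul_sub, smul_neg, smul_smul, inv_mul_cancel₀ hμ.ne', one_smul]
    rw [h3]; abel
  -- the error bound
  have hyy₀ : ‖y - y₀‖ ≤ μ⁻¹ * ‖η‖ := by
    have h := hnon (x - μ⁻¹ • η) x y y₀ ξ ξ₀ hξA hξ₀ (by rw [hsplit, smul_add, hsm]; exact heq) he₀
    have : ‖(x - μ⁻¹ • η) - x‖ = μ⁻¹ * ‖η‖ := by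
      have e : (x - μ⁻¹ • η) - x = -(μ⁻¹ • η) := by abel
      rw [e, norm_neg, norm_smul, Real.norm_eq_abs, abs_of_pos (inv_pos.mpr hμ)]
    linarith [h, this.le, this.ge]
  have hlow : c - ‖η‖ ≤ μ * ‖y - x‖ := by
    have ht : ‖y₀ - x‖ ≤ ‖y₀ - y‖ + ‖y - x‖ := by
      have e : y₀ - x = (y₀ - y) + (y - x) := by abel
      rw [e]; exact norm_add_le _ _
    have hn : ‖y₀ - y‖ = ‖y - y₀‖ := by rw [norm_sub_rev]
    have h5 : μ * ‖y₀ - x‖ ≤ μ * ‖y₀ - y‖ + μ * ‖y - x‖ := by nlinarith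
    have h6 : μ * ‖y₀ - y‖ ≤ ‖η‖ := by
      rw [hn]
      calc μ * ‖y - y₀‖ ≤ μ * (μ⁻¹ * ‖η‖) := by nlinarith
        _ = ‖η‖ := by field_simp
    simp only [hcdef]
    linarith
  have hηb : ‖η‖ ≤ σ * (c - ‖η‖) := by
    have h7 : ‖η‖ * (1 + σ) < σ * c := by
      rw [← lt_div_iff₀ (by positivity)] at *
      linarith [hη]
    nlinarith
  have cond3 : ‖η‖ ≤ σ * max ‖ξ‖ (μ * ‖y - x‖) := by
    calc ‖η‖ ≤ σ * (c - ‖η‖) := hηb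
      _ ≤ σ * (μ * ‖y - x‖) := by nlinarith
      _ ≤ σ * max ‖ξ‖ (μ * ‖y - x‖) := by
          have := le_max_right ‖ξ‖ (μ * ‖y - x‖)
          nlinarith [le_max_right ‖ξ‖ (μ * ‖y - x‖), norm_nonneg ξ, norm_nonneg (y-x)]
  refine ⟨⟨(y, ξ), ⟨hξA, eq2, cond3⟩, ?_⟩, fun y' ξ' h' he' => halg y' ξ' he'⟩
  -- uniqueness
  rintro ⟨y', ξ'⟩ ⟨hA', he', -⟩
  simp only at hA' he' ⊢
  have h1 := (halg y' ξ' he').2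
  have h2 := (halg y ξ eq2).2
  have hyy : y' = y := by
    have hm := hmono y y' ξ ξ' hξA hA'
    have hd : ξ - ξ' = μ • (y' - x) - μ • (y - x) := by rw [h1, h2]; abel
    have hd2 : ξ - ξ' = μ • (y' - y) := by rw [hd, ← smul_sub]; congr 1; abel
    rw [hd2, real_inner_smul_left] at hm
    have h3 : ⟪y' - y, y - y'⟫ = -(‖y - y'‖^2) := by
      have e : y' - y = -(y - y') := by abel
      rw [e, inner_neg_left, real_inner_self_eq_norm_sq]
    rw [h3] at hm
    have h4 : ‖y - y'‖^2 ≤ 0 := by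
      have := le_of_mul_le_mul_left (by linarith : μ * 0 ≤ μ * (-(‖y - y'‖^2) - 0 + 0)) hμ
      linarith
    have h5 : ‖y - y'‖ = 0 := by nlinarith [norm_nonneg (y - y')]
    have := sub_eq_zero.mp (norm_eq_zero.mp h5)
    exact this.symm
  have hξξ : ξ' = ξ := by rw [h1, h2, hyy]
  exact Prod.ext hyy hξξ
end

section
/- Let X be a real reflexive Banach space, f : X → ℝ fully Legendre with ∇f continuous, A : X → 2^{X*} maximally monotone, λ > 0, and suppose (∇f + λA)⁻¹ : X* → X is single-valued and continuous. Let U ⊆ X* be open with 0 ∈ U, and let Φ, Ψ : U × X* × X × X → ℝ be continuous. Fix x ∈ X, and for η ∈ U set ỹ(η) := (∇f + λA)⁻¹(λη + ∇f(x)), ξ̃(η) := η − (1/λ)(∇f(ỹ(η)) − ∇f(x)). If Φ(0, ξ̃(0), x, ỹ(0)) < Ψ(0, ξ̃(0), x, ỹ(0)), then there exists r > 0 such that every η ∈ X* with ‖η‖ < r lies in U and the triple (η, ỹ(η), ξ̃(η)) satisfies ξ̃(η) ∈ A(ỹ(η)), η = ξ̃(η) + (1/λ)(∇f(ỹ(η))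 − ∇f(x)), and Φ(η, ξ̃(η), x, ỹ(η)) < Ψ(η, ξ̃(η), x, ỹ(η)); moreover (ỹ(η), ξ̃(η)) is the unique pair in X × X* satisfying the first two conditions. -/
/-!
Multiplying by `λ`, the equation `η = ξ + λ⁻¹ (∇f y - ∇f x)` becomes `λη + ∇f x = ∇f y + λξ`, so
together with `ξ ∈ A y` it says precisely that `y = (∇f + λA)⁻¹(λη + ∇f x)` with `ξ` the
corresponding element of `A y`: the inclusion system has the single solution `(ỹ(η), ξ̃(η))`
for every `η`. The strict inequality `Φ < Ψ` and membership in `U` persist near `η = 0` because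
`η ↦ (η, ξ̃(η), x, ỹ(η))` is continuous, the resolvent and `∇f` being continuous.
-/

open Filter Topology

section ResolventInclusion

variable {𝕜 E F : Type*} [Field 𝕜] [AddCommGroup F] [Module 𝕜 F]

theorem eq_add_inv_smul_sub_iff {lam : 𝕜} (hlam : lam ≠ 0) (η ξ u v : F) :
    η = ξ + lam⁻¹ • (u - v) ↔ lam • η + v = u + lam • ξ := by
  rw [← smul_right_inj hlam, smul_add, smul_inv_smul₀ hlam]
  constructor <;> intro h <;> linear_combination (norm := module) h

theorem mem_and_eq_iff_eq_resolvent {g : E → F} {A : E → Set F} {R : F → E} {lam : 𝕜}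
    (hR : ∀ w y, (∃ a ∈ A y, w = g y + lam • a) ↔ y = R w) (hlam : lam ≠ 0)
    (η : F) (x y : E) (ξ : F) :
    ξ ∈ A y ∧ η = ξ + lam⁻¹ • (g y - g x) ↔
      y = R (lam • η + g x) ∧ ξ = η - lam⁻¹ • (g y - g x) := by
  rw [eq_sub_iff_add_eq, eq_comm (b := η), eq_add_inv_smul_sub_iff hlam]
  constructor
  · rintro ⟨hξ, hw⟩
    exact ⟨(hR _ _).1 ⟨ξ, hξ, hw⟩, hw⟩
  · rintro ⟨hy, hw⟩
    obtain ⟨a, ha, hwa⟩ := (hR _ _).2 hy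
    have hξa : ξ = a := smul_right_injective F hlam (add_left_cancel (hw.symm.trans hwa))
    exact ⟨hξa ▸ ha, hw⟩

end ResolventInclusion

theorem strongly_implicit_inexact_resolvent_general
    {X : Type*} [NormedAddCommGroup X] [NormedSpace ℝ X]
    (g : X → StrongDual ℝ X)
    (hgcont : Continuous g)
    (A : X → Set (StrongDual ℝ X))
    (lam : ℝ) (hlam : 0 < lam)
    (R : StrongDual ℝ X → X)
    (hR : ∀ w y, (∃ a ∈ A y, w = g y + lam • a) ↔ y = R w)
    (hRcont : Continuous R)
    (U : Set (StrongDual ℝ X)) (hU : IsOpen U) (hU0 : (0 : StrongDual ℝ X) ∈ U)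
    (Φ Ψ : StrongDual ℝ X × StrongDual ℝ X × X × X → ℝ)
    (hΦ : Continuous Φ) (hΨ : Continuous Ψ)
    (x : X)
    (ytil : StrongDual ℝ X → X) (hytil : ∀ η, ytil η = R (lam • η + g x))
    (xitil : StrongDual ℝ X → StrongDual ℝ X)
    (hxitil : ∀ η, xitil η = η - lam⁻¹ • (g (ytil η) - g x))
    (hlt : Φ (0, xitil 0, x, ytil 0) < Ψ (0, xitil 0, x, ytil 0)) :
    ∃ r > 0, ∀ η : StrongDual ℝ X, ‖η‖ < r →
      η ∈ U ∧
      xitil η ∈ A (ytil η) ∧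
      η = xitil η + lam⁻¹ • (g (ytil η) - g x) ∧
      Φ (η, xitil η, x, ytil η) < Ψ (η, xitil η, x, ytil η) ∧
      (∀ y ξ, ξ ∈ A y → η = ξ + lam⁻¹ • (g y - g x) →
        y = ytil η ∧ ξ = xitil η) := by
  have hytil_cont : Continuous ytil := by
    rw [funext hytil]; fun_prop
  have hxitil_cont : Continuous xitil := by
    rw [funext hxitil]; fun_prop
  have hargs : Continuous fun η => (η, xitil η, x, ytil η) := by fun_prop
  have hnear : ∀ᶠ η in 𝓝 0, η ∈ U ∧ Φ (η, xitil η, x, ytil η) < Ψ (η, xitil η, x, ytil η) :=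
    (show ∀ᶠ η in 𝓝 0, η ∈ U from hU.mem_nhds hU0).and
      ((hΦ.comp hargs).continuousAt.eventually_lt (hΨ.comp hargs).continuousAt hlt)
  obtain ⟨r, hr, hball⟩ := Metric.eventually_nhds_iff.1 hnear
  refine ⟨r, hr, fun η hη => ?_⟩
  have hsolves := (mem_and_eq_iff_eq_resolvent hR hlam.ne' η x (ytil η) (xitil η)).2
    ⟨hytil η, hxitil η⟩
  obtain ⟨hU_η, hΦΨ⟩ := hball (by rwa [dist_zero_right])
  refine ⟨hU_η, hsolves.1, hsolves.2, hΦΨ, fun y ξ hξ hη_eq => ?_⟩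
  obtain ⟨hy, rfl⟩ := (mem_and_eq_iff_eq_resolvent hR hlam.ne' η x y ξ).1 ⟨hξ, hη_eq⟩
  rw [← hytil] at hy
  exact ⟨hy, hy ▸ (hxitil η).symm⟩

/-- (Strongly implicit inexact resolvent inclusion problem.)
Let `X` be a real reflexive Banach space, `f : X → ℝ` fully Legendre (convex,
lower semicontinuous, Gâteaux differentiable with continuous gradient
`g = ∇f`, and with conjugate `fstar` Gâteaux differentiable on `X*`),
`A : X → 2^{X*}` maximally monotone, `λ > 0`, and suppose `(∇f + λA)⁻¹`
is single-valued and continuous (given by `R`, characterized by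
`y = R w ↔ w ∈ ∇f(y) + λA(y)`). Let `U ⊆ X*` be open with `0 ∈ U` and
`Φ, Ψ` continuous. If `Φ(0, ξ̃(0), x, ỹ(0)) < Ψ(0, ξ̃(0), x, ỹ(0))`, then for
some `r > 0`, every `η` with `‖η‖ < r` lies in `U`, the triple
`(η, ỹ(η), ξ̃(η))` solves the strongly implicit system, and `(ỹ(η), ξ̃(η))`
is the unique solution pair of the inclusion system. -/
theorem strongly_implicit_inexact_resolvent
    {X : Type*} [NormedAddCommGroup X] [NormedSpace ℝ X] [CompleteSpace X]
    (hrefl : Function.Surjective (NormedSpace.inclusionInDoubleDual ℝ X))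
    (f : X → ℝ) (hconv : ConvexOn ℝ Set.univ f) (hlsc : LowerSemicontinuous f)
    (g : X → StrongDual ℝ X)
    (hg : ∀ x v, HasLineDerivAt ℝ f (g x v) x v)
    (hgcont : Continuous g)
    (fstar : StrongDual ℝ X → ℝ)
    (hfstar : ∀ p, IsLUB (Set.range fun x => p x - f x) (fstar p))
    (gstar : StrongDual ℝ X → X)
    (hgstar : ∀ p q, HasLineDerivAt ℝ fstar (q (gstar p)) p q)
    (A : X → Set (StrongDual ℝ X))
    (hmono : ∀ x1 x2 u1 u2, u1 ∈ A x1 → u2 ∈ A x2 → 0 ≤ (u1 - u2) (x1 - x2))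
    (hmax : ∀ y v, (∀ x u, u ∈ A x → 0 ≤ (v - u) (y - x)) → v ∈ A y)
    (lam : ℝ) (hlam : 0 < lam)
    (R : StrongDual ℝ X → X)
    (hR : ∀ w y, (∃ a ∈ A y, w = g y + lam • a) ↔ y = R w)
    (hRcont : Continuous R)
    (U : Set (StrongDual ℝ X)) (hU : IsOpen U) (hU0 : (0 : StrongDual ℝ X) ∈ U)
    (Φ Ψ : StrongDual ℝ X × StrongDual ℝ X × X × X → ℝ)
    (hΦ : Continuous Φ) (hΨ : Continuous Ψ)
    (x : X)
    (ytil : StrongDual ℝ X → X) (hytil : ∀ η, ytil η = R (lam • η + g x))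
    (xitil : StrongDual ℝ X → StrongDual ℝ X)
    (hxitil : ∀ η, xitil η = η - lam⁻¹ • (g (ytil η) - g x))
    (hlt : Φ (0, xitil 0, x, ytil 0) < Ψ (0, xitil 0, x, ytil 0)) :
    ∃ r > 0, ∀ η : StrongDual ℝ X, ‖η‖ < r →
      η ∈ U ∧
      xitil η ∈ A (ytil η) ∧
      η = xitil η + lam⁻¹ • (g (ytil η) - g x) ∧
      Φ (η, xitil η, x, ytil η) < Ψ (η, xitil η, x, ytil η) ∧
      (∀ y ξ, ξ ∈ A y → η = ξ + lam⁻¹ • (g y - g x) →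
        y = ytil η ∧ ξ = xitil η) :=
  strongly_implicit_inexact_resolvent_general g hgcont A lam hlam R hR hRcont U hU hU0 Φ Ψ hΦ hΨ x
    ytil hytil xitil hxitil hlt
end

section
/- Let X be a real Hilbert space with inner product ⟨·,·⟩, let M : X → X be a continuous, symmetric, strongly positive definite, invertible linear operator, A : X → 2^X maximally monotone, and c > 0. Then for every x, η ∈ X there is a unique pair (y, ξ) ∈ X × X with ξ ∈ A(y) and η = cMξ + y − x; moreover y = (I + cMA)⁻¹(x + η) and ξ = (cM)⁻¹η − (cM)⁻¹(y − x). -/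
/-!
Writing `y + c • M ξ = w` as `M⁻¹ y + c • ξ = M⁻¹ w`, a solution is a fixed point of
`y ↦ J (y - τ • (M⁻¹ y - M⁻¹ w))`, where `J` is the resolvent of `(τ * c) • A`. Since `M⁻¹` is
strongly monotone and bounded, this map is a contraction for small `τ > 0`, and Banach's
theorem gives the solution. Uniqueness follows from the monotonicity of `A` and the positivity
of `M`.

The resolvent exists by Minty's theorem, derived here from the Kirszbraun–Valentine
intersection property: for the graph points `(y, ξ)` of `A`, the closed balls centred at `y - ξ`
of radius `‖z - (y + ξ)‖` have a common point `q`. For finitely many balls, a minimiser over the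
convex hull of the centres of the largest excess `‖q - (y - ξ)‖ ^ 2 - ‖z - (y + ξ)‖ ^ 2` is a
barycentre of the active centres, and monotonicity makes that excess nonpositive; weak
compactness of balls passes to the whole graph. Then `((z + q) / 2, (z - q) / 2)` is
monotonically related to the whole graph, so it lies on it by maximality.
-/

open RealInnerProductSpace Topology
open scoped Pointwise

theorem Finset.eventually_sup'_lt_sup' {ι α : Type*} [TopologicalSpace α] {l : Filter α} {a : α}
    (hl : l ≤ 𝓝 a) (s : Finset ι) (hs : s.Nonempty) (g : ι → α → ℝ)
    (hg : ∀ i ∈ s, ContinuousAt (g i) a)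
    (hact : ∀ i ∈ s, g i a = s.sup' hs (fun j => g j a) → ∀ᶠ x in l, g i x < g i a) :
    ∀ᶠ x in l, s.sup' hs (fun j => g j x) < s.sup' hs (fun j => g j a) := by
  simp only [Finset.sup'_lt_iff]
  refine (Filter.eventually_all_finset s).2 fun i hi => ?_
  rcases (Finset.le_sup' (fun j => g j a) hi).eq_or_lt with h | h
  · exact (hact i hi h).mono fun x hx => hx.trans_eq h
  · exact hl ((hg i hi).eventually (gt_mem_nhds h))

section InnerProductSpace

variable {X : Type*} [NormedAddCommGroup X] [InnerProductSpace ℝ X]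

theorem norm_sub_le_norm_add_iff_inner_nonneg (u v : X) :
    ‖u - v‖ ≤ ‖u + v‖ ↔ 0 ≤ ⟪u, v⟫ := by
  rw [← sq_le_sq₀ (norm_nonneg _) (norm_nonneg _), norm_sub_sq_real, norm_add_sq_real]
  constructor <;> intro h <;> linarith

theorem sum_mul_norm_sq_eq_norm_sum_smul_sq_add {ι : Type*} (t : Finset ι) (w : ι → ℝ)
    (hw : ∑ i ∈ t, w i = 1) (v : ι → X) :
    ∑ i ∈ t, w i * ‖v i‖ ^ 2 = ‖∑ i ∈ t, w i • v i‖ ^ 2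
      + 2⁻¹ * ∑ i ∈ t, ∑ j ∈ t, w i * w j * ‖v i - v j‖ ^ 2 := by
  have hsq : ‖∑ i ∈ t, w i • v i‖ ^ 2 = ∑ i ∈ t, ∑ j ∈ t, w i * w j * ⟪v i, v j⟫ := by
    rw [← real_inner_self_eq_norm_sq, sum_inner]
    simp only [inner_sum, real_inner_smul_left, real_inner_smul_right]
    exact Finset.sum_congr rfl fun i _ => Finset.sum_congr rfl fun j _ => by ring
  have hexp : ∀ i j, w i * w j * ‖v i - v j‖ ^ 2 = w j * (w i * ‖v i‖ ^ 2)
      + w i * (w j * ‖v j‖ ^ 2) - 2 * (w i * w j * ⟪v i, v j⟫) := by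
    intro i j
    rw [norm_sub_sq_real]
    ring
  simp only [hexp, Finset.sum_add_distrib, Finset.sum_sub_distrib, ← Finset.sum_mul,
    ← Finset.mul_sum, hw, ← hsq]
  ring

theorem sum_mul_norm_sum_smul_sub_sq_le {ι : Type*} (t : Finset ι) {w : ι → ℝ}
    (hw₀ : ∀ i ∈ t, 0 ≤ w i) (hw₁ : ∑ i ∈ t, w i = 1) {a b : ι → X}
    (hab : ∀ i ∈ t, ∀ j ∈ t, ‖b i - b j‖ ≤ ‖a i - a j‖) (z : X) :
    ∑ i ∈ t, w i * ‖∑ j ∈ t, w j • b j - b i‖ ^ 2 ≤ ∑ i ∈ t, w i * ‖z - a i‖ ^ 2 := by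
  set q := ∑ j ∈ t, w j • b j
  have hq : ∑ i ∈ t, w i • (q - b i) = 0 := by
    simp only [smul_sub, Finset.sum_sub_distrib, ← Finset.sum_smul, hw₁, one_smul, sub_self, q]
  have hpair : ∀ i ∈ t, ∀ j ∈ t, w i * w j * ‖(q - b i) - (q - b j)‖ ^ 2
      ≤ w i * w j * ‖(z - a i) - (z - a j)‖ ^ 2 := by
    intro i hi j hj
    rw [sub_sub_sub_cancel_left, sub_sub_sub_cancel_left, norm_sub_rev (b j), norm_sub_rev (a j)]
    gcongr
    · exact mul_nonneg (hw₀ i hi) (hw₀ j hj)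
    · exact hab i hi j hj
  rw [sum_mul_norm_sq_eq_norm_sum_smul_sq_add t w hw₁,
    sum_mul_norm_sq_eq_norm_sum_smul_sq_add t w hw₁, hq, norm_zero]
  linarith [sq_nonneg ‖∑ i ∈ t, w i • (z - a i)‖,
    Finset.sum_le_sum fun i hi => Finset.sum_le_sum fun j hj => hpair i hi j hj]

theorem exists_forall_inner_sub_le_neg_norm_sq {C : Set X} (hC : Convex ℝ C)
    (hCc : IsComplete C) (hCne : C.Nonempty) {q : X} (hq : q ∉ C) :
    ∃ p ∈ C, p ≠ q ∧ ∀ b ∈ C, ⟪q - b, p - q⟫ ≤ -‖p - q‖ ^ 2 := by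
  obtain ⟨p, hpC, hp⟩ := exists_norm_eq_iInf_of_complete_convex hCne hCc hC q
  have hproj := (norm_eq_iInf_iff_real_inner_le_zero hC hpC).1 hp
  refine ⟨p, hpC, fun h => hq (h ▸ hpC), fun b hb => ?_⟩
  have hsplit : ⟪q - b, p - q⟫ = -‖p - q‖ ^ 2 + ⟪q - p, b - p⟫ := by
    rw [show q - b = -(p - q) - (b - p) by abel, inner_sub_left, inner_neg_left,
      real_inner_self_eq_norm_sq, ← neg_sub q p, inner_neg_right, real_inner_comm]
    ring
  linarith [hproj b hb]

theorem mem_convexHull_active_of_isMinOn {ι : Type*} {s : Finset ι} (hs : s.Nonempty)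
    (b : ι → X) (ρ : ι → ℝ) {q : X} (hq : q ∈ convexHull ℝ (b '' s))
    (hmin : IsMinOn (fun y => s.sup' hs fun i => ‖y - b i‖ ^ 2 - ρ i)
      (convexHull ℝ (b '' s)) q) :
    q ∈ convexHull ℝ
      (b '' {i ∈ (s : Set ι) | ‖q - b i‖ ^ 2 - ρ i = s.sup' hs fun j => ‖q - b j‖ ^ 2 - ρ j}) := by
  set f : X → ℝ := fun y => s.sup' hs fun i => ‖y - b i‖ ^ 2 - ρ i
  set act : Set ι := {i ∈ (s : Set ι) | ‖q - b i‖ ^ 2 - ρ i = f q}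
  by_contra hqC
  obtain ⟨i₀, hi₀, hi₀max⟩ := Finset.exists_mem_eq_sup' hs fun i => ‖q - b i‖ ^ 2 - ρ i
  have hactne : (b '' act).Nonempty := ⟨b i₀, i₀, ⟨hi₀, hi₀max.symm⟩, rfl⟩
  have hactfin : (b '' act).Finite := (s.finite_toSet.subset fun i hi => hi.1).image b
  obtain ⟨p, hpC, hpq, hsep⟩ := exists_forall_inner_sub_le_neg_norm_sq (convex_convexHull ℝ _)
    (hactfin.isCompact_convexHull ℝ).isComplete (hactne.mono (subset_convexHull ℝ _)) hqC
  set d := p - q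
  have hd : 0 < ‖d‖ ^ 2 := by
    have := norm_pos_iff.2 (sub_ne_zero.2 hpq)
    positivity
  set g : ι → ℝ → ℝ := fun i t => (‖q - b i‖ ^ 2 - ρ i) + 2 * t * ⟪q - b i, d⟫ + t ^ 2 * ‖d‖ ^ 2
  have hline : ∀ t : ℝ, f (q + t • d) = s.sup' hs fun i => g i t := by
    intro t
    refine Finset.sup'_congr hs rfl fun i _ => ?_
    rw [show q + t • d - b i = (q - b i) + t • d by abel, norm_add_sq_real,
      real_inner_smul_right, norm_smul, mul_pow, Real.norm_eq_abs, sq_abs]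
    ring
  have hg0 : ∀ i, g i 0 = ‖q - b i‖ ^ 2 - ρ i := fun i => by simp [g]
  -- Moving from `q` towards `p` strictly decreases every active term, since
  -- `⟪q - b i, d⟫ ≤ -‖d‖ ^ 2` for the active centres `b i`.
  have hdesc : ∀ᶠ t in 𝓝[>] (0 : ℝ), f (q + t • d) < f q := by
    have := Finset.eventually_sup'_lt_sup' (l := 𝓝[>] (0 : ℝ)) nhdsWithin_le_nhds s hs g
      (fun i _ => by fun_prop) ?_
    · simpa only [hline, hg0] using this
    intro i hi hact
    simp only [hg0] at hact
    have hbi := hsep (b i) (subset_convexHull ℝ _ ⟨i, ⟨hi, hact⟩, rfl⟩)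
    filter_upwards [Ioo_mem_nhdsGT one_pos] with t ht
    have := mul_le_mul_of_nonneg_left hbi (by linarith [ht.1] : (0 : ℝ) ≤ 2 * t)
    nlinarith [mul_pos ht.1 hd, ht.2]
  obtain ⟨t, hft, ht⟩ := (hdesc.and (Ioo_mem_nhdsGT one_pos)).exists
  have hCK : convexHull ℝ (b '' act) ⊆ convexHull ℝ (b '' s) :=
    convexHull_mono (Set.image_mono fun i hi => hi.1)
  have hmem : q + t • d ∈ convexHull ℝ (b '' s) :=
    (convex_convexHull ℝ _).add_smul_sub_mem hq (hCK hpC) ⟨ht.1.le, ht.2.le⟩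
  exact (hmin hmem).not_gt hft

theorem exists_forall_norm_sub_le_of_norm_sub_le {ι : Type*} (s : Finset ι) {a b : ι → X}
    (hab : ∀ i ∈ s, ∀ j ∈ s, ‖b i - b j‖ ≤ ‖a i - a j‖) (z : X) :
    ∃ q, ∀ i ∈ s, ‖q - b i‖ ≤ ‖z - a i‖ := by
  rcases s.eq_empty_or_nonempty with rfl | hs
  · exact ⟨0, by simp⟩
  set f : X → ℝ := fun y => s.sup' hs fun i => ‖y - b i‖ ^ 2 - ‖z - a i‖ ^ 2
  have hK : IsCompact (convexHull ℝ (b '' s)) := (s.finite_toSet.image b).isCompact_convexHull ℝ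
  obtain ⟨i₀, hi₀⟩ := hs
  have hf : Continuous f := by fun_prop
  obtain ⟨q, hqK, hmin⟩ :=
    hK.exists_isMinOn ⟨b i₀, subset_convexHull ℝ _ ⟨i₀, hi₀, rfl⟩⟩ hf.continuousOn
  suffices hfq : f q ≤ 0 by
    refine ⟨q, fun i hi => (sq_le_sq₀ (norm_nonneg _) (norm_nonneg _)).1 ?_⟩
    linarith [Finset.le_sup' (fun i => ‖q - b i‖ ^ 2 - ‖z - a i‖ ^ 2) hi]
  -- `q` is a barycentre of active centres, where the excess equals `f q`; comparing with the
  -- barycentric inequality forces `f q ≤ 0`.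
  obtain ⟨κ, _, w, y, hw₀, hw₁, hy, hqy⟩ :=
    mem_convexHull_iff_exists_fintype.1 (mem_convexHull_active_of_isMinOn _ b _ hqK hmin)
  choose j hj hbj using hy
  obtain rfl : y = b ∘ j := funext fun k => (hbj k).symm
  have key := sum_mul_norm_sum_smul_sub_sq_le Finset.univ (fun k _ => hw₀ k) hw₁
    (a := a ∘ j) (b := b ∘ j) (fun k _ l _ => hab _ (hj k).1 _ (hj l).1) z
  have hact : ∀ k, ‖q - b (j k)‖ ^ 2 = ‖z - a (j k)‖ ^ 2 + f q := fun k => by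
    linarith [(hj k).2]
  simp only [Function.comp] at hqy key
  simp only [hqy, hact, mul_add, Finset.sum_add_distrib, ← Finset.sum_mul, hw₁] at key
  linarith

theorem exists_forall_norm_sub_le_of_forall_finset [CompleteSpace X] {ι : Type*} (c : ι → X)
    (r : ι → ℝ) (h : ∀ u : Finset ι, ∃ q, ∀ i ∈ u, ‖q - c i‖ ≤ r i) :
    ∃ q, ∀ i, ‖q - c i‖ ≤ r i := by
  classical
  rcases isEmpty_or_nonempty ι with _ | ⟨⟨i₀⟩⟩
  · exact ⟨0, isEmptyElim⟩
  -- Via Riesz, the balls become weak-* closed balls of the dual, compact by Banach–Alaoglu.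
  let φ := InnerProductSpace.toDual ℝ X
  let T : ι → Set (WeakDual ℝ X) := fun i =>
    WeakDual.toStrongDual ⁻¹' Metric.closedBall (φ (c i)) (r i)
  have hT : ∀ q i, StrongDual.toWeakDual (φ q) ∈ T i ↔ ‖q - c i‖ ≤ r i := by
    intro q i
    rw [Set.mem_preimage, Metric.mem_closedBall, dist_eq_norm, ← φ.norm_map (q - c i), map_sub]
    rfl
  obtain ⟨χ, -, hχ⟩ := (WeakDual.isCompact_closedBall (φ (c i₀)) (r i₀)).inter_iInter_nonempty T
    (fun i => WeakDual.isClosed_closedBall _ _) fun u => by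
      obtain ⟨q, hq⟩ := h (insert i₀ u)
      exact ⟨_, (hT q i₀).2 (hq i₀ (Finset.mem_insert_self _ _)),
        Set.mem_iInter₂.2 fun i hi => (hT q i).2 (hq i (Finset.mem_insert_of_mem hi))⟩
  refine ⟨φ.symm (WeakDual.toStrongDual χ), fun i => (hT _ i).1 ?_⟩
  simpa using Set.mem_iInter.1 hχ i

theorem exists_pos_mul_norm_sq_le_inner_of_rightInverse (M Minv : X →L[ℝ] X)
    (hinv : ∀ x, M (Minv x) = x) {β : ℝ} (hβ : 0 < β) (hM : ∀ x, β * ‖x‖ ^ 2 ≤ ⟪M x, x⟫) :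
    ∃ α > 0, ∀ v, α * ‖v‖ ^ 2 ≤ ⟪Minv v, v⟫ := by
  have hM1 : 0 < ‖M‖ + 1 := by positivity
  refine ⟨β / (‖M‖ + 1) ^ 2, by positivity, fun v => ?_⟩
  have hv : ‖v‖ ≤ (‖M‖ + 1) * ‖Minv v‖ :=
    calc ‖v‖ = ‖M (Minv v)‖ := by rw [hinv]
      _ ≤ ‖M‖ * ‖Minv v‖ := M.le_opNorm _
      _ ≤ (‖M‖ + 1) * ‖Minv v‖ := by gcongr; linarith
  calc β / (‖M‖ + 1) ^ 2 * ‖v‖ ^ 2 ≤ β / (‖M‖ + 1) ^ 2 * ((‖M‖ + 1) * ‖Minv v‖) ^ 2 := by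
        gcongr
    _ = β * ‖Minv v‖ ^ 2 := by field_simp
    _ ≤ ⟪M (Minv v), Minv v⟫ := hM _
    _ = ⟪Minv v, v⟫ := by rw [hinv, real_inner_comm]

theorem ContinuousLinearMap.norm_sub_smul_apply_le (T : X →L[ℝ] X) {α τ : ℝ}
    (hT : ∀ v, α * ‖v‖ ^ 2 ≤ ⟪T v, v⟫) (hτ : 0 ≤ τ) (hτα : τ * ‖T‖ ^ 2 ≤ α) (v : X) :
    ‖v - τ • T v‖ ≤ √(1 - τ * α) * ‖v‖ := by
  have hTv : ‖T v‖ ^ 2 ≤ ‖T‖ ^ 2 * ‖v‖ ^ 2 := by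
    rw [← mul_pow]
    gcongr
    exact T.le_opNorm v
  have hsq : ‖v - τ • T v‖ ^ 2 ≤ (1 - τ * α) * ‖v‖ ^ 2 := by
    rw [norm_sub_sq_real, real_inner_smul_right, norm_smul, mul_pow, Real.norm_eq_abs, sq_abs,
      real_inner_comm]
    nlinarith [mul_le_mul_of_nonneg_left (hT v) hτ, mul_le_mul_of_nonneg_left hTv (sq_nonneg τ),
      mul_le_mul_of_nonneg_right hτα (mul_nonneg hτ (sq_nonneg ‖v‖))]
  calc ‖v - τ • T v‖ = √(‖v - τ • T v‖ ^ 2) := (Real.sqrt_sq (norm_nonneg _)).symm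
    _ ≤ √((1 - τ * α) * ‖v‖ ^ 2) := Real.sqrt_le_sqrt hsq
    _ = √(1 - τ * α) * ‖v‖ := by rw [Real.sqrt_mul' _ (sq_nonneg _), Real.sqrt_sq (norm_nonneg _)]

end InnerProductSpace

section MonotoneOperator

variable {X : Type*} [NormedAddCommGroup X] [InnerProductSpace ℝ X] {A : X → Set X}

def IsMonotoneOperator (A : X → Set X) : Prop :=
  ∀ x₁ x₂ u₁ u₂, u₁ ∈ A x₁ → u₂ ∈ A x₂ → 0 ≤ ⟪u₁ - u₂, x₁ - x₂⟫

def IsMaximalMonotoneOperator (A : X → Set X) : Prop :=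
  IsMonotoneOperator A ∧ ∀ y v, (∀ x u, u ∈ A x → 0 ≤ ⟪v - u, y - x⟫) → v ∈ A y

theorem IsMonotoneOperator.norm_sub_le_norm_add_smul_sub (hA : IsMonotoneOperator A) {s : ℝ}
    (hs : 0 ≤ s) {y₁ y₂ ξ₁ ξ₂ : X} (h₁ : ξ₁ ∈ A y₁) (h₂ : ξ₂ ∈ A y₂) :
    ‖y₁ - y₂‖ ≤ ‖(y₁ + s • ξ₁) - (y₂ + s • ξ₂)‖ := by
  have hsplit : (y₁ + s • ξ₁) - (y₂ + s • ξ₂) = (y₁ - y₂) + s • (ξ₁ - ξ₂) := by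
    rw [smul_sub]; abel
  rw [← sq_le_sq₀ (norm_nonneg _) (norm_nonneg _), hsplit, norm_add_sq_real,
    real_inner_smul_right, real_inner_comm]
  nlinarith [mul_nonneg hs (hA _ _ _ _ h₁ h₂), sq_nonneg ‖s • (ξ₁ - ξ₂)‖]

theorem IsMonotoneOperator.eq_of_add_smul_apply_eq (hA : IsMonotoneOperator A)
    (M : X →L[ℝ] X) {β : ℝ} (hβ : 0 < β) (hM : ∀ x, β * ‖x‖ ^ 2 ≤ ⟪M x, x⟫) {c : ℝ}
    (hc : 0 < c) {y₁ y₂ ξ₁ ξ₂ : X} (h₁ : ξ₁ ∈ A y₁) (h₂ : ξ₂ ∈ A y₂)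
    (heq : y₁ + c • M ξ₁ = y₂ + c • M ξ₂) : y₁ = y₂ ∧ ξ₁ = ξ₂ := by
  have hy : y₁ - y₂ = -(c • M (ξ₁ - ξ₂)) := by
    rw [map_sub, smul_sub, neg_sub, sub_eq_sub_iff_add_eq_add, heq, add_comm]
  have hmono := hA _ _ _ _ h₁ h₂
  rw [hy, inner_neg_right, real_inner_smul_right, real_inner_comm] at hmono
  have hsq : ‖ξ₁ - ξ₂‖ ^ 2 ≤ 0 := by
    nlinarith [mul_le_mul_of_nonneg_left (hM (ξ₁ - ξ₂)) hc.le, mul_pos hc hβ]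
  have hξ : ξ₁ = ξ₂ :=
    sub_eq_zero.1 (norm_eq_zero.1 (pow_eq_zero_iff two_ne_zero |>.1 (hsq.antisymm (sq_nonneg _))))
  subst hξ
  exact ⟨add_right_cancel heq, rfl⟩

theorem IsMaximalMonotoneOperator.exists_add_mem [CompleteSpace X]
    (hA : IsMaximalMonotoneOperator A) (z : X) : ∃ y ξ, ξ ∈ A y ∧ y + ξ = z := by
  let Γ := {p : X × X // p.2 ∈ A p.1}
  have hΓ : ∀ p p' : Γ, ‖(p.1.1 - p.1.2) - (p'.1.1 - p'.1.2)‖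
      ≤ ‖(p.1.1 + p.1.2) - (p'.1.1 + p'.1.2)‖ := by
    intro p p'
    rw [sub_sub_sub_comm, add_sub_add_comm, norm_sub_le_norm_add_iff_inner_nonneg,
      real_inner_comm]
    exact hA.1 _ _ _ _ p.2 p'.2
  obtain ⟨q, hq⟩ := exists_forall_norm_sub_le_of_forall_finset (fun p : Γ => p.1.1 - p.1.2)
    (fun p => ‖z - (p.1.1 + p.1.2)‖)
    fun u => exists_forall_norm_sub_le_of_norm_sub_le u (fun p _ p' _ => hΓ p p') z
  refine ⟨(2 : ℝ)⁻¹ • (z + q), (2 : ℝ)⁻¹ • (z - q), hA.2 _ _ fun x u hu => ?_, by module⟩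
  rw [real_inner_comm, ← norm_sub_le_norm_add_iff_inner_nonneg]
  convert hq ⟨(x, u), hu⟩ using 2 <;> module

theorem IsMaximalMonotoneOperator.smul (hA : IsMaximalMonotoneOperator A) {s : ℝ} (hs : 0 < s) :
    IsMaximalMonotoneOperator fun y => s • A y := by
  refine ⟨?_, fun y v hv => ⟨s⁻¹ • v, hA.2 y _ fun x u hu => ?_, smul_inv_smul₀ hs.ne' v⟩⟩
  · rintro x₁ x₂ _ _ ⟨u₁, hu₁, rfl⟩ ⟨u₂, hu₂, rfl⟩
    rw [← smul_sub, real_inner_smul_left]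
    exact mul_nonneg hs.le (hA.1 _ _ _ _ hu₁ hu₂)
  · rw [show s⁻¹ • v - u = s⁻¹ • (v - s • u) by rw [smul_sub, inv_smul_smul₀ hs.ne'],
      real_inner_smul_left]
    exact mul_nonneg (inv_nonneg.2 hs.le) (hv x (s • u) (Set.smul_mem_smul_set hu))

theorem IsMaximalMonotoneOperator.exists_add_smul_mem [CompleteSpace X]
    (hA : IsMaximalMonotoneOperator A) {s : ℝ} (hs : 0 < s) (w : X) :
    ∃ y ξ, ξ ∈ A y ∧ y + s • ξ = w := by
  obtain ⟨y, _, ⟨ξ, hξ, rfl⟩, hy⟩ := (hA.smul hs).exists_add_mem w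
  exact ⟨y, ξ, hξ, hy⟩

theorem IsMaximalMonotoneOperator.exists_lipschitzWith_resolvent [CompleteSpace X]
    (hA : IsMaximalMonotoneOperator A) {s : ℝ} (hs : 0 < s) :
    ∃ J : X → X, LipschitzWith 1 J ∧ ∀ w, ∃ ξ ∈ A (J w), J w + s • ξ = w := by
  choose J ξ hξ hJ using hA.exists_add_smul_mem hs
  refine ⟨J, LipschitzWith.of_dist_le_mul fun w₁ w₂ => ?_, fun w => ⟨ξ w, hξ w, hJ w⟩⟩
  rw [dist_eq_norm, dist_eq_norm, NNReal.coe_one, one_mul]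
  simpa only [hJ] using hA.1.norm_sub_le_norm_add_smul_sub hs.le (hξ w₁) (hξ w₂)

theorem IsMaximalMonotoneOperator.exists_add_smul_apply_mem [CompleteSpace X]
    (hA : IsMaximalMonotoneOperator A) (M Minv : X →L[ℝ] X) (hinv : ∀ x, M (Minv x) = x)
    {β : ℝ} (hβ : 0 < β) (hM : ∀ x, β * ‖x‖ ^ 2 ≤ ⟪M x, x⟫) {c : ℝ} (hc : 0 < c) (w : X) :
    ∃ y ξ, ξ ∈ A y ∧ y + c • M ξ = w := by
  obtain ⟨α, hα, hMinv⟩ := exists_pos_mul_norm_sq_le_inner_of_rightInverse M Minv hinv hβ hM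
  set τ := α / (‖Minv‖ ^ 2 + 1)
  have hτ : 0 < τ := by positivity
  have hτα : τ * ‖Minv‖ ^ 2 ≤ α := by
    rw [div_mul_eq_mul_div, div_le_iff₀ (by positivity)]
    nlinarith
  obtain ⟨J, hJ, hJξ⟩ := hA.exists_lipschitzWith_resolvent (mul_pos hτ hc)
  set F : X → X := fun y => J (y - τ • (Minv y - Minv w))
  have hF : ContractingWith (√(1 - τ * α)).toNNReal F := by
    refine ⟨Real.toNNReal_lt_one.2 ?_, LipschitzWith.of_dist_le' fun y₁ y₂ => ?_⟩
    · rw [Real.sqrt_lt' one_pos]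
      nlinarith [mul_pos hτ hα]
    calc dist (F y₁) (F y₂)
        ≤ dist (y₁ - τ • (Minv y₁ - Minv w)) (y₂ - τ • (Minv y₂ - Minv w)) := by
          simpa only [NNReal.coe_one, one_mul] using
            hJ.dist_le_mul (y₁ - τ • (Minv y₁ - Minv w)) (y₂ - τ • (Minv y₂ - Minv w))
      _ = ‖(y₁ - y₂) - τ • Minv (y₁ - y₂)‖ := by
          rw [dist_eq_norm, map_sub]
          congr 1
          module
      _ ≤ √(1 - τ * α) * dist y₁ y₂ := by
          rw [dist_eq_norm]
          exact Minv.norm_sub_smul_apply_le hMinv hτ.le hτα _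
  set y := ContractingWith.fixedPoint F hF
  have hFy : F y = y := ContractingWith.fixedPoint_isFixedPt hF
  obtain ⟨ξ, hξ, hyξ⟩ := hJξ (y - τ • (Minv y - Minv w))
  simp only [F] at hFy
  rw [hFy] at hξ hyξ
  have hcξ : c • ξ = Minv w - Minv y := by
    apply smul_right_injective X hτ.ne'
    linear_combination (norm := module) hyξ
  refine ⟨y, ξ, hξ, ?_⟩
  rw [← map_smul, hcξ, map_sub, hinv, hinv]
  abel

end MonotoneOperator

theorem parente_lotito_solodov_step_well_defined_general
    {X : Type*} [NormedAddCommGroup X] [InnerProductSpace ℝ X] [CompleteSpace X]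
    (M Minv : X →L[ℝ] X)
    (hinv1 : ∀ x, Minv (M x) = x) (hinv2 : ∀ x, M (Minv x) = x)
    (hstrong : ∃ β > 0, ∀ x, β * ‖x‖ ^ 2 ≤ ⟪M x, x⟫)
    (A : X → Set X)
    (hmono : ∀ x1 x2 u1 u2, u1 ∈ A x1 → u2 ∈ A x2 → 0 ≤ ⟪u1 - u2, x1 - x2⟫)
    (hmax : ∀ y v, (∀ x u, u ∈ A x → 0 ≤ ⟪v - u, y - x⟫) → v ∈ A y)
    (c : ℝ) (hc : 0 < c) (x η : X) :
    (∃! p : X × X, p.2 ∈ A p.1 ∧ η = c • M p.2 + p.1 - x) ∧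
    (∀ y ξ, ξ ∈ A y → η = c • M ξ + y - x →
      x + η = y + c • M ξ ∧ ξ = c⁻¹ • Minv η - c⁻¹ • Minv (y - x)) := by
  obtain ⟨β, hβ, hM⟩ := hstrong
  have hA : IsMaximalMonotoneOperator A := ⟨hmono, hmax⟩
  have hstep : ∀ y ξ, η = c • M ξ + y - x ↔ y + c • M ξ = x + η := fun y ξ => by
    rw [eq_sub_iff_add_eq, add_comm η, add_comm (c • M ξ), eq_comm]
  refine ⟨?_, fun y ξ _ hη => ⟨((hstep y ξ).1 hη).symm, ?_⟩⟩
  · obtain ⟨y, ξ, hξ, hyξ⟩ := hA.exists_add_smul_apply_mem M Minv hinv2 hβ hM hc (x + η)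
    refine ⟨(y, ξ), ⟨hξ, (hstep y ξ).2 hyξ⟩, fun ⟨y', ξ'⟩ ⟨hξ', hη'⟩ => ?_⟩
    obtain ⟨rfl, rfl⟩ :=
      hA.1.eq_of_add_smul_apply_eq M hβ hM hc hξ' hξ (((hstep _ _).1 hη').trans hyξ.symm)
    rfl
  · rw [hη, show c • M ξ + y - x = c • M ξ + (y - x) by abel, map_add, map_smul, hinv1, smul_add,
      inv_smul_smul₀ hc.ne', add_sub_cancel_right]

/-- (Well-definedness of the exact step of the
Parente–Lotito–Solodov variable metric proximal method.) For a continuous,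
symmetric, strongly positive definite, invertible linear operator `M`, a
maximally monotone `A` and `c > 0`, for every `x, η` there is a unique pair
`(y, ξ)` with `ξ ∈ A(y)` and `η = cMξ + y − x`; moreover
`y = (I + cMA)⁻¹(x + η)` (i.e. `x + η = y + cMξ`) and
`ξ = (cM)⁻¹η − (cM)⁻¹(y − x)`. -/
theorem parente_lotito_solodov_step_well_defined
    {X : Type*} [NormedAddCommGroup X] [InnerProductSpace ℝ X] [CompleteSpace X]
    (M Minv : X →L[ℝ] X)
    (hinv1 : ∀ x, Minv (M x) = x) (hinv2 : ∀ x, M (Minv x) = x)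
    (hsym : ∀ x y, ⟪M x, y⟫ = ⟪x, M y⟫)
    (hstrong : ∃ β > 0, ∀ x, β * ‖x‖ ^ 2 ≤ ⟪M x, x⟫)
    (A : X → Set X)
    (hmono : ∀ x1 x2 u1 u2, u1 ∈ A x1 → u2 ∈ A x2 → 0 ≤ ⟪u1 - u2, x1 - x2⟫)
    (hmax : ∀ y v, (∀ x u, u ∈ A x → 0 ≤ ⟪v - u, y - x⟫) → v ∈ A y)
    (c : ℝ) (hc : 0 < c) (x η : X) :
    (∃! p : X × X, p.2 ∈ A p.1 ∧ η = c • M p.2 + p.1 - x) ∧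
    (∀ y ξ, ξ ∈ A y → η = c • M ξ + y - x →
      x + η = y + c • M ξ ∧ ξ = c⁻¹ • Minv η - c⁻¹ • Minv (y - x)) :=
  parente_lotito_solodov_step_well_defined_general M Minv hinv1 hinv2 hstrong A hmono hmax c hc x η
end
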